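/- In a thin cut system, every thin pre-cut is nested with all but finitely many thin pre-cuts. -/

import Mathlib

variable {V : Type*}

/-- The boundary `NC` of a vertex set: vertices outside `C` adjacent to `C`. -/
def bdry (G : SimpleGraph V) (C : Set V) : Set V :=
  {v | v ∉ C ∧ ∃ u ∈ C, G.Adj u v}

/-- The `*`-complement: `C* = VX \ (C ∪ NC)`. -/
def cstar (G : SimpleGraph V) (C : Set V) : Set V :=
  (C ∪ bdry G C)ᶜ

/-- A set of vertices is connected if its induced subgraph is connected. -/
def ConnSet (G : SimpleGraph V) (C : Set V) : Prop :=
  (G.induce C).Connected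

/-- `Q` is a component of `A`: a maximal connected subset of `A`. -/
def IsCompOf (G : SimpleGraph V) (Q A : Set V) : Prop :=
  Q ⊆ A ∧ ConnSet G Q ∧ ∀ R : Set V, Q ⊆ R → R ⊆ A → ConnSet G R → R = Q

/-- `A`, `B` form a pair of opposite corners of `C` and `D`. -/
def OppCorners (G : SimpleGraph V) (C D A B : Set V) : Prop :=
  (A = C ∩ D ∧ B = cstar G C ∩ cstar G D) ∨
  (A = cstar G C ∩ cstar G D ∧ B = C ∩ D) ∨
  (A = C ∩ cstar G D ∧ B = cstar G C ∩ D) ∨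
  (A = cstar G C ∩ D ∧ B = C ∩ cstar G D)

/-- Cut system (Definition 2.1). -/
structure IsCutSystem (G : SimpleGraph V) (𝒞 : Set (Set V)) : Prop where
  nonempty : ∀ C ∈ 𝒞, C.Nonempty
  conn : ∀ C ∈ 𝒞, ConnSet G C
  finBd : ∀ C ∈ 𝒞, (bdry G C).Finite
  star_star : ∀ C ∈ 𝒞, cstar G (cstar G C) = C
  a1 : ∀ C ∈ 𝒞, ∀ D ∈ 𝒞, ∀ A B : Set V, OppCorners G C D A B →
    (∃ E ∈ 𝒞, E ⊆ A) → (∃ E ∈ 𝒞, E ⊆ B) →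
    ∀ Q : Set V, (IsCompOf G Q A ∨ IsCompOf G Q B) → (∃ E ∈ 𝒞, E ⊆ Q) → Q ∈ 𝒞
  a2 : ∀ C ∈ 𝒞, ∀ D ∈ 𝒞, ∃ A B : Set V, OppCorners G C D A B ∧
    (∃ E ∈ 𝒞, E ⊆ A) ∧ (∃ E ∈ 𝒞, E ⊆ B)

/-- A thin cut system: all cuts have boundary of the minimal cardinality `κ`. -/
structure IsThinCutSystem (G : SimpleGraph V) (𝒞 : Set (Set V)) (κ : ℕ) : Prop where
  toIsCutSystem : IsCutSystem G 𝒞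
  thin : ∀ C ∈ 𝒞, (bdry G C).ncard = κ

/-- A pre-cut: a cut or the `*`-complement of a cut. -/
def PreCut (G : SimpleGraph V) (𝒞 : Set (Set V)) (E : Set V) : Prop :=
  E ∈ 𝒞 ∨ ∃ C ∈ 𝒞, E = cstar G C

/-- `A` is an isolated corner of the pair `C`, `D`: a corner containing no cut,
whose two adjacent links are empty. -/
def IsolatedCorner (G : SimpleGraph V) (𝒞 : Set (Set V)) (C D A : Set V) : Prop :=
  (¬ ∃ E ∈ 𝒞, E ⊆ A) ∧
  ((A = C ∩ D ∧ C ∩ bdry G D = ∅ ∧ D ∩ bdry G C = ∅) ∨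
   (A = C ∩ cstar G D ∧ C ∩ bdry G D = ∅ ∧ cstar G D ∩ bdry G C = ∅) ∨
   (A = cstar G C ∩ D ∧ cstar G C ∩ bdry G D = ∅ ∧ D ∩ bdry G C = ∅) ∨
   (A = cstar G C ∩ cstar G D ∧ cstar G C ∩ bdry G D = ∅ ∧ cstar G D ∩ bdry G C = ∅))

/-- Two sets are nested if they have an isolated corner. -/
def Nested (G : SimpleGraph V) (𝒞 : Set (Set V)) (C D : Set V) : Prop :=
  ∃ A : Set V, IsolatedCorner G 𝒞 C D A

/-- A slice: a component of the complement of a separator which is not a cut. -/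
def IsSlice (G : SimpleGraph V) (𝒞 : Set (Set V)) (Q : Set V) : Prop :=
  (∃ C ∈ 𝒞, IsCompOf G Q (bdry G C)ᶜ) ∧ Q ∉ 𝒞

/-- `Y` is `k`-inseparable (Definition 2.12). -/
def Insep (G : SimpleGraph V) (k : ℕ) (Y : Set V) : Prop :=
  (Y.Infinite ∨ k + 1 ≤ Y.ncard) ∧
  ∀ C : Set V, (bdry G C).Finite → (bdry G C).ncard ≤ k →
    Y ⊆ C ∪ bdry G C ∨ Y ⊆ cstar G C ∪ bdry G C

/-- `C` separates `Y₁` from `Y₂` (Definition 2.10, one orientation). -/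
def Separates (G : SimpleGraph V) (C Y₁ Y₂ : Set V) : Prop :=
  Y₁ ⊆ C ∪ bdry G C ∧ Y₂ ⊆ cstar G C ∪ bdry G C ∧
  ¬ Y₁ ⊆ bdry G C ∧ ¬ Y₂ ⊆ bdry G C

/-- The set `S` separates the vertices `x` and `y`. -/
def SepVert (G : SimpleGraph V) (S : Set V) (x y : V) : Prop :=
  x ∉ S ∧ y ∉ S ∧ ∀ K : Set V, IsCompOf G K Sᶜ → x ∈ K → y ∉ K

/-- `S` is a tight `x`-`y`-separator. -/
def TightSep (G : SimpleGraph V) (x y : V) (S : Set V) : Prop :=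
  ∃ A B : Set V, IsCompOf G A Sᶜ ∧ IsCompOf G B Sᶜ ∧ A ≠ B ∧ x ∈ A ∧ y ∈ B ∧
    ∀ s ∈ S, (∃ a ∈ A, G.Adj s a) ∧ (∃ b ∈ B, G.Adj s b)

/-- `μ(C)`: the number of cuts of the system not nested with `C`. -/
noncomputable def mu (G : SimpleGraph V) (𝒞 : Set (Set V)) (C : Set V) : ℕ :=
  {D ∈ 𝒞 | ¬ Nested G 𝒞 C D}.ncard




section walks
variable {G : SimpleGraph V} {Q : Set V}

def inducedHom (G : SimpleGraph V) (Q : Set V) : (G.induce Q) →g G :=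
  ⟨Subtype.val, fun h => h⟩

lemma reach_of_walk {x y : V} (w : G.Walk x y) (hw : ∀ z ∈ w.support, z ∈ Q) :
    ∀ (hx : x ∈ Q) (hy : y ∈ Q), (G.induce Q).Reachable ⟨x, hx⟩ ⟨y, hy⟩ := by
  induction w with
  | nil => intro hx hy; rfl
  | cons h p ih =>
    intro hx hy
    rename_i u v z
    have hv : v ∈ Q := hw v (by simp [SimpleGraph.Walk.support_cons])
    have h1 : (G.induce Q).Adj ⟨u, hx⟩ ⟨v, hv⟩ := h
    exact (h1.reachable).trans (ih (fun z hz => hw z (by simp [SimpleGraph.Walk.support_cons, hz])) hv hy)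

lemma connSet_iff :
    ConnSet G Q ↔ Q.Nonempty ∧ ∀ x ∈ Q, ∀ y ∈ Q, ∃ w : G.Walk x y, ∀ z ∈ w.support, z ∈ Q := by
  rw [ConnSet, SimpleGraph.connected_iff]
  constructor
  · rintro ⟨hpre, hne⟩
    obtain ⟨⟨x0, hx0⟩⟩ := hne
    refine ⟨⟨x0, hx0⟩, fun x hx y hy => ?_⟩
    obtain ⟨p⟩ := hpre ⟨x, hx⟩ ⟨y, hy⟩
    refine ⟨p.map (inducedHom G Q), fun z hz => ?_⟩
    erw [SimpleGraph.Walk.support_map] at hz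
    obtain ⟨⟨a, ha⟩, _, rfl⟩ := List.mem_map.1 hz
    exact ha
  · rintro ⟨⟨x0, hx0⟩, h⟩
    refine ⟨fun a b => ?_, ⟨⟨x0, hx0⟩⟩⟩
    obtain ⟨w, hw⟩ := h a a.2 b b.2
    have := reach_of_walk w hw a.2 b.2
    simpa using this

lemma connSet_nonempty (h : ConnSet G Q) : Q.Nonempty := (connSet_iff.1 h).1

lemma connSet_insert {v : V} {u : V} (hQ : ConnSet G Q) (hu : u ∈ Q) (huv : G.Adj u v) :
    ConnSet G (insert v Q) := by
  rw [connSet_iff] at hQ ⊢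
  obtain ⟨hne, h⟩ := hQ
  refine ⟨⟨v, Set.mem_insert _ _⟩, ?_⟩
  have key : ∀ x ∈ Q, ∃ w : G.Walk v x, ∀ z ∈ w.support, z ∈ insert v Q := by
    intro x hx
    obtain ⟨w, hw⟩ := h u hu x hx
    refine ⟨SimpleGraph.Walk.cons huv.symm w, fun z hz => ?_⟩
    rw [SimpleGraph.Walk.support_cons, List.mem_cons] at hz
    rcases hz with hz | hz
    · exact hz ▸ Set.mem_insert _ _
    · exact Set.mem_insert_of_mem _ (hw z hz)
  intro x hx y hy
  rcases hx with rfl | hx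
  · rcases hy with rfl | hy
    · exact ⟨SimpleGraph.Walk.nil, by simp⟩
    · exact key y hy
  · rcases hy with rfl | hy
    · obtain ⟨w, hw⟩ := key x hx
      exact ⟨w.reverse, fun z hz => hw z (by simpa using hz)⟩
    · obtain ⟨w, hw⟩ := h x hx y hy
      exact ⟨w, fun z hz => Set.mem_insert_of_mem _ (hw z hz)⟩

lemma connSet_union {A B : Set V} (hA : ConnSet G A) (hB : ConnSet G B)
    (hAB : (A ∩ B).Nonempty) : ConnSet G (A ∪ B) := by
  rw [connSet_iff] at hA hB ⊢
  obtain ⟨p, hpA, hpB⟩ := hAB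
  obtain ⟨-, hA⟩ := hA
  obtain ⟨-, hB⟩ := hB
  have key : ∀ x ∈ A ∪ B, ∃ w : G.Walk x p, ∀ z ∈ w.support, z ∈ A ∪ B := by
    rintro x (hx | hx)
    · obtain ⟨w, hw⟩ := hA x hx p hpA
      exact ⟨w, fun z hz => Or.inl (hw z hz)⟩
    · obtain ⟨w, hw⟩ := hB x hx p hpB
      exact ⟨w, fun z hz => Or.inr (hw z hz)⟩
  refine ⟨⟨p, Or.inl hpA⟩, fun x hx y hy => ?_⟩
  obtain ⟨w1, hw1⟩ := key x hx
  obtain ⟨w2, hw2⟩ := key y hy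
  refine ⟨w1.append w2.reverse, fun z hz => ?_⟩
  rw [SimpleGraph.Walk.mem_support_append_iff] at hz
  rcases hz with hz | hz
  · exact hw1 z hz
  · exact hw2 z (by simpa using hz)

/-- A connected set inside a union of two mutually non-adjacent sets lies in one side. -/

lemma connSet_split {X Y : Set V} (hQ : ConnSet G Q) (hQXY : Q ⊆ X ∪ Y)
    (hnoedge : ∀ a b, a ∈ X → b ∈ Y → ¬ G.Adj a b) (hx : (Q ∩ X).Nonempty) :
    Q ⊆ X := by
  rw [connSet_iff] at hQ
  obtain ⟨-, h⟩ := hQ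
  obtain ⟨p, hpQ, hpX⟩ := hx
  intro q hq
  obtain ⟨w, hw⟩ := h p hpQ q hq
  clear hq hpQ
  induction w with
  | nil => exact hpX
  | cons hadj w ih =>
    rename_i u v z
    have hvQ : v ∈ Q := hw v (by simp [SimpleGraph.Walk.support_cons])
    have hvX : v ∈ X := by
      rcases hQXY hvQ with hv | hv
      · exact hv
      · exact absurd hadj (hnoedge _ _ hpX hv)
    exact ih hvX (fun z hz => hw z (by simp [SimpleGraph.Walk.support_cons, hz]))
lemma connSet_split_cases {X Y : Set V} (hQ : ConnSet G Q) (hQXY : Q ⊆ X ∪ Y)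
    (hnoedge : ∀ a b, a ∈ X → b ∈ Y → ¬ G.Adj a b)
    (hnoedge' : ∀ a b, a ∈ Y → b ∈ X → ¬ G.Adj a b)
    (hne : Q.Nonempty) : Q ⊆ X ∨ Q ⊆ Y := by
  by_cases hx : (Q ∩ X).Nonempty
  · exact Or.inl (connSet_split hQ hQXY hnoedge hx)
  · refine Or.inr (connSet_split hQ (by rwa [Set.union_comm] at hQXY) hnoedge' ?_)
    obtain ⟨q, hq⟩ := hne
    rcases hQXY hq with h | h
    · exact absurd ⟨q, hq, h⟩ hx
    · exact ⟨q, hq, h⟩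

end walks

section basic
variable {G : SimpleGraph V} {C F Q X : Set V}

lemma not_mem_of_mem_bdry {v : V} (h : v ∈ bdry G C) : v ∉ C := h.1

lemma mem_cstar_iff {v : V} : v ∈ cstar G C ↔ v ∉ C ∧ v ∉ bdry G C := by
  simp [cstar, not_or]

lemma compl_bdry : (bdry G C)ᶜ = C ∪ cstar G C := by
  ext v
  simp only [Set.mem_compl_iff, Set.mem_union, mem_cstar_iff]
  by_cases hv : v ∈ C
  · simp [hv]; exact fun h => h.1 hv
  · tauto

lemma cstar_disjoint : C ∩ cstar G C = ∅ := by
  ext v; simp [mem_cstar_iff]; tauto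

lemma no_edge_cstar {u v : V} (hu : u ∈ C) (hv : v ∈ cstar G C) : ¬ G.Adj u v := by
  intro h
  rw [mem_cstar_iff] at hv
  exact hv.2 ⟨hv.1, u, hu, h⟩

lemma bdry_cstar_subset : bdry G (cstar G C) ⊆ bdry G C := by
  rintro v ⟨hv, u, hu, hadj⟩
  rw [mem_cstar_iff, not_and_or, not_not] at hv
  rcases hv with hv | hv
  · exact absurd hadj.symm (no_edge_cstar hv hu)
  · exact not_not.1 hv

/-- Every connected subset of `X` extends to a component of `X`. -/
lemma comp_exists (hQ : ConnSet G Q) (hQX : Q ⊆ X) : ∃ A, Q ⊆ A ∧ IsCompOf G A X := by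
  obtain ⟨m, hm, hmax⟩ := zorn_subset_nonempty {R | Q ⊆ R ∧ R ⊆ X ∧ ConnSet G R}
    (fun c hc hchain hne => by
      refine ⟨⋃₀ c, ⟨?_, ?_, ?_⟩, fun s hs => Set.subset_sUnion_of_mem hs⟩
      · obtain ⟨R, hR⟩ := hne
        exact (hc hR).1.trans (Set.subset_sUnion_of_mem hR)
      · exact Set.sUnion_subset fun R hR => (hc hR).2.1
      · rw [connSet_iff]
        obtain ⟨R0, hR0⟩ := hne
        obtain ⟨q, hq⟩ := connSet_nonempty (hc hR0).2.2
        refine ⟨⟨q, Set.subset_sUnion_of_mem hR0 hq⟩, ?_⟩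
        rintro x hx y hy
        obtain ⟨Rx, hRx, hxR⟩ := hx
        obtain ⟨Ry, hRy, hyR⟩ := hy
        rcases hchain.total hRx hRy with hsub | hsub
        · obtain ⟨w, hw⟩ := (connSet_iff.1 (hc hRy).2.2).2 x (hsub hxR) y hyR
          exact ⟨w, fun z hz => Set.subset_sUnion_of_mem hRy (hw z hz)⟩
        · obtain ⟨w, hw⟩ := (connSet_iff.1 (hc hRx).2.2).2 x hxR y (hsub hyR)
          exact ⟨w, fun z hz => Set.subset_sUnion_of_mem hRx (hw z hz)⟩)
    Q ⟨subset_rfl, hQX, hQ⟩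
  obtain ⟨hQm, hmX, hmC⟩ := hmax.prop
  refine ⟨m, hQm, hmX, hmC, fun R hmR hRX hRC => ?_⟩
  exact subset_antisymm (hmax.2 ⟨hQm.trans hmR, hRX, hRC⟩ hmR) hmR

lemma comp_absorb {v : V} {u : V} (hA : IsCompOf G Q X) (hu : u ∈ Q) (hadj : G.Adj u v)
    (hvX : v ∈ X) : v ∈ Q := by
  have h := hA.2.2 (insert v Q) (Set.subset_insert _ _)
    (Set.insert_subset hvX hA.1) (connSet_insert hA.2.1 hu hadj)
  rw [← h]; exact Set.mem_insert _ _

lemma comp_unique {A B : Set V} (hA : IsCompOf G A X) (hB : IsCompOf G B X)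
    (hAB : (A ∩ B).Nonempty) : A = B := by
  have hconn : ConnSet G (A ∪ B) := connSet_union hA.2.1 hB.2.1 hAB
  have h1 := hA.2.2 (A ∪ B) Set.subset_union_left (Set.union_subset hA.1 hB.1) hconn
  have h2 := hB.2.2 (A ∪ B) Set.subset_union_right (Set.union_subset hA.1 hB.1) hconn
  exact h1.symm.trans h2

/-- Any walk from inside `F` to outside `F` passes through `bdry G F`. -/
lemma walk_meets_bdry {x y : V} (w : G.Walk x y) : x ∈ F → y ∉ F →
    ∃ z ∈ w.support, z ∈ bdry G F := by
  induction w with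
  | nil => exact fun hx hy => absurd hx hy
  | cons hadj w ih =>
    intro hx hy
    rename_i u v t
    by_cases hv : v ∈ F
    · obtain ⟨z, hz, hzb⟩ := ih hv hy
      exact ⟨z, by simp [SimpleGraph.Walk.support_cons, hz], hzb⟩
    · by_cases hvb : v ∈ bdry G F
      · exact ⟨v, by simp [SimpleGraph.Walk.support_cons], hvb⟩
      · exact absurd ⟨hv, u, hx, hadj⟩ hvb

/-- A connected set with boundary inside `S` that is disjoint from `S`—in particular a
cut—is a component of `Sᶜ` provided `bdry G F ⊆ S` and `F ∩ S = ∅`. -/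
lemma comp_of_conn_bdry (hF : ConnSet G F) (hFS : F ⊆ (bdry G F)ᶜ ∩ X)
    (hX : X ⊆ (bdry G F)ᶜ) : IsCompOf G F X := by
  refine ⟨fun v hv => (hFS hv).2, hF, fun R hFR hRX hRC => ?_⟩
  by_contra hne
  obtain ⟨y, hyR, hyF⟩ : ∃ y ∈ R, y ∉ F := by
    by_contra h
    push_neg at h
    exact hne (subset_antisymm h hFR)
  obtain ⟨x0, hx0⟩ := connSet_nonempty hF
  obtain ⟨w, hw⟩ := (connSet_iff.1 hRC).2 x0 (hFR hx0) y hyR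
  obtain ⟨z, hzw, hzb⟩ := walk_meets_bdry w hx0 hyF
  exact hX (hRX (hw z hzw)) hzb

end basic

section cutsys
variable {G : SimpleGraph V} {𝒞 : Set (Set V)} {κ : ℕ} {C E F A X : Set V}

lemma mem_tri (G : SimpleGraph V) (C : Set V) (v : V) :
    v ∈ C ∨ v ∈ bdry G C ∨ v ∈ cstar G C := by
  by_cases h1 : v ∈ C
  · exact Or.inl h1
  · by_cases h2 : v ∈ bdry G C
    · exact Or.inr (Or.inl h2)
    · exact Or.inr (Or.inr (mem_cstar_iff.2 ⟨h1, h2⟩))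

variable (hts : IsThinCutSystem G 𝒞 κ)
include hts

lemma cut_in_cstar (hC : C ∈ 𝒞) : ∃ E ∈ 𝒞, E ⊆ cstar G C := by
  obtain ⟨A, B, hopp, hA, hB⟩ := hts.toIsCutSystem.a2 C hC C hC
  have hcc : C ∩ cstar G C = ∅ := cstar_disjoint
  have hempty : ∀ E ∈ 𝒞, ¬ E ⊆ C ∩ cstar G C := by
    intro E hE hsub
    obtain ⟨v, hv⟩ := hts.toIsCutSystem.nonempty E hE
    rw [hcc] at hsub
    exact hsub hv
  rcases hopp with ⟨hA', hB'⟩ | ⟨hA', hB'⟩ | ⟨hA', hB'⟩ | ⟨hA', hB'⟩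
  · obtain ⟨E, hE, hEB⟩ := hB
    exact ⟨E, hE, by rw [hB', Set.inter_self] at hEB; exact hEB⟩
  · obtain ⟨E, hE, hEA⟩ := hA
    exact ⟨E, hE, by rw [hA', Set.inter_self] at hEA; exact hEA⟩
  · obtain ⟨E, hE, hEA⟩ := hA
    rw [hA'] at hEA
    exact absurd hEA (hempty E hE)
  · obtain ⟨E, hE, hEB⟩ := hB
    rw [hB'] at hEB
    exact absurd hEB (hempty E hE)

lemma bdry_cstar_cut (hC : C ∈ 𝒞) : bdry G (cstar G C) = bdry G C := by
  refine subset_antisymm bdry_cstar_subset ?_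
  have := bdry_cstar_subset (G := G) (C := cstar G C)
  rwa [hts.toIsCutSystem.star_star C hC] at this

lemma star_star_pre (hF : PreCut G 𝒞 F) : cstar G (cstar G F) = F := by
  rcases hF with hF | ⟨C, hC, rfl⟩
  · exact hts.toIsCutSystem.star_star F hF
  · rw [hts.toIsCutSystem.star_star C hC]

lemma precut_cstar (hF : PreCut G 𝒞 F) : PreCut G 𝒞 (cstar G F) := by
  rcases hF with hF | ⟨C, hC, rfl⟩
  · exact Or.inr ⟨F, hF, rfl⟩
  · rw [hts.toIsCutSystem.star_star C hC]; exact Or.inl hC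

lemma bdry_cstar_pre (hF : PreCut G 𝒞 F) : bdry G (cstar G F) = bdry G F := by
  rcases hF with hF | ⟨C, hC, rfl⟩
  · exact bdry_cstar_cut hts hF
  · rw [hts.toIsCutSystem.star_star C hC, bdry_cstar_cut hts hC]

lemma bdry_precut_ncard (hF : PreCut G 𝒞 F) : (bdry G F).ncard = κ := by
  rcases hF with hF | ⟨C, hC, rfl⟩
  · exact hts.thin F hF
  · rw [bdry_cstar_cut hts hC]; exact hts.thin C hC

lemma bdry_precut_finite (hF : PreCut G 𝒞 F) : (bdry G F).Finite := by
  rcases hF with hF | ⟨C, hC, rfl⟩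
  · exact hts.toIsCutSystem.finBd F hF
  · rw [bdry_cstar_cut hts hC]; exact hts.toIsCutSystem.finBd C hC

lemma comp_cstar_mem (hC : C ∈ 𝒞) (hA : IsCompOf G A (cstar G C))
    (hcut : ∃ E ∈ 𝒞, E ⊆ A) : A ∈ 𝒞 := by
  have h1 : OppCorners G C C (cstar G C ∩ cstar G C) (C ∩ C) := Or.inr (Or.inl ⟨rfl, rfl⟩)
  refine hts.toIsCutSystem.a1 C hC C hC _ _ h1 ?_ ?_ A (Or.inl ?_) hcut
  · obtain ⟨E, hE, hEs⟩ := cut_in_cstar hts hC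
    exact ⟨E, hE, by rwa [Set.inter_self]⟩
  · exact ⟨C, hC, by rw [Set.inter_self]⟩
  · rwa [Set.inter_self]

omit hts in
lemma bdry_comp_cstar_subset (hA : IsCompOf G A (cstar G C)) : bdry G A ⊆ bdry G C := by
  rintro v ⟨hvA, u, hu, hadj⟩
  rcases mem_tri G C v with hv | hv | hv
  · exact absurd hadj.symm (no_edge_cstar hv (hA.1 hu))
  · exact hv
  · exact absurd (comp_absorb hA hu hadj hv) hvA

lemma bdry_comp_cstar_eq (hC : C ∈ 𝒞) (hA : IsCompOf G A (cstar G C)) (hA𝒞 : A ∈ 𝒞) :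
    bdry G A = bdry G C :=
  Set.eq_of_subset_of_ncard_le (bdry_comp_cstar_subset hA)
    (by rw [hts.thin A hA𝒞, hts.thin C hC]) (hts.toIsCutSystem.finBd C hC)

/-- Lemma M: inside every pre-cut `F` there is a cut `A` which is a component of
`(bdry F)ᶜ` with full boundary `bdry F`. -/
lemma exists_good_comp (hF : PreCut G 𝒞 F) :
    ∃ A, A ∈ 𝒞 ∧ A ⊆ F ∧ IsCompOf G A (bdry G F)ᶜ ∧ bdry G A = bdry G F := by
  rcases hF with hF𝒞 | ⟨C, hC, rfl⟩
  · refine ⟨F, hF𝒞, subset_rfl, ?_, rfl⟩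
    refine comp_of_conn_bdry (hts.toIsCutSystem.conn F hF𝒞) ?_ subset_rfl
    intro v hv
    have : v ∉ bdry G F := fun hb => hb.1 hv
    exact ⟨this, this⟩
  · obtain ⟨E₁, hE₁, hE₁s⟩ := cut_in_cstar hts hC
    obtain ⟨A, hE₁A, hA⟩ := comp_exists (hts.toIsCutSystem.conn E₁ hE₁) hE₁s
    have hA𝒞 : A ∈ 𝒞 := comp_cstar_mem hts hC hA ⟨E₁, hE₁, hE₁A⟩
    have hbd : bdry G A = bdry G (cstar G C) := by
      rw [bdry_comp_cstar_eq hts hC hA hA𝒞, bdry_cstar_cut hts hC]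
    refine ⟨A, hA𝒞, hA.1, ?_, hbd⟩
    have hcompl : (bdry G (cstar G C))ᶜ = cstar G C ∪ C := by
      rw [bdry_cstar_cut hts hC, compl_bdry, Set.union_comm]
    refine ⟨?_, hA.2.1, fun R hAR hRX hRC => ?_⟩
    · intro v hv
      rw [hcompl]
      exact Or.inl (hA.1 hv)
    · refine hA.2.2 R hAR ?_ hRC
      rw [hcompl] at hRX
      refine connSet_split hRC hRX (fun a b ha hb hab => no_edge_cstar hb ha hab.symm) ?_
      obtain ⟨a, ha⟩ := connSet_nonempty hA.2.1
      exact ⟨a, hAR ha, hA.1 ha⟩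

lemma nested_star_left (hC : C ∈ 𝒞) {F : Set V} (h : Nested G 𝒞 C F) :
    Nested G 𝒞 (cstar G C) F := by
  have ss : cstar G (cstar G C) = C := hts.toIsCutSystem.star_star C hC
  have bb : bdry G (cstar G C) = bdry G C := bdry_cstar_cut hts hC
  obtain ⟨A, hnocut, hopt⟩ := h
  refine ⟨A, hnocut, ?_⟩
  rcases hopt with ⟨hA, h1, h2⟩ | ⟨hA, h1, h2⟩ | ⟨hA, h1, h2⟩ | ⟨hA, h1, h2⟩
  · exact Or.inr (Or.inr (Or.inl ⟨by rwa [ss], by rwa [ss], by rwa [bb]⟩))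
  · exact Or.inr (Or.inr (Or.inr ⟨by rwa [ss], by rwa [ss], by rwa [bb]⟩))
  · exact Or.inl ⟨hA, h1, by rwa [bb]⟩
  · exact Or.inr (Or.inl ⟨hA, h1, by rwa [bb]⟩)

/-- If a cut avoids the boundary of `F`, the pair is nested. -/
lemma nested_of_avoid (hE : C ∈ 𝒞) (h0 : C ∩ bdry G F = ∅) : Nested G 𝒞 C F := by
  have hnoF : ∀ a b, a ∈ F → b ∈ cstar G F → ¬ G.Adj a b := fun a b ha hb => no_edge_cstar ha hb
  have hCsub : C ⊆ F ∪ cstar G F := by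
    intro v hv
    have : v ∉ bdry G F := fun hb => (Set.eq_empty_iff_forall_notMem.1 h0 v) ⟨hv, hb⟩
    have := compl_bdry (G := G) (C := F) ▸ (Set.mem_compl_iff _ _).2 this
    exact this
  have hnonempty : C.Nonempty := hts.toIsCutSystem.nonempty C hE
  by_cases hCF : (C ∩ F).Nonempty
  · have hCF' : C ⊆ F :=
      connSet_split (hts.toIsCutSystem.conn C hE) hCsub hnoF hCF
    refine ⟨C ∩ cstar G F, ?_, Or.inr (Or.inl ⟨rfl, h0, ?_⟩)⟩
    · rintro ⟨E', hE', hsub⟩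
      obtain ⟨v, hv⟩ := hts.toIsCutSystem.nonempty E' hE'
      have := hsub hv
      have hv' : v ∈ F ∩ cstar G F := ⟨hCF' this.1, this.2⟩
      rw [cstar_disjoint] at hv'
      exact hv'
    · ext v
      simp only [Set.mem_inter_iff, Set.mem_empty_iff_false, iff_false, not_and]
      rintro hv ⟨hvC, u, hu, hadj⟩
      exact no_edge_cstar (hCF' hu) hv hadj
  · have hCF' : C ⊆ cstar G F := by
      refine connSet_split (hts.toIsCutSystem.conn C hE) (by rwa [Set.union_comm] at hCsub)
        (fun a b ha hb hab => no_edge_cstar hb ha hab.symm) ?_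
      obtain ⟨v, hv⟩ := hnonempty
      rcases hCsub hv with h | h
      · exact absurd ⟨v, hv, h⟩ hCF
      · exact ⟨v, hv, h⟩
    refine ⟨C ∩ F, ?_, Or.inl ⟨rfl, h0, ?_⟩⟩
    · rintro ⟨E', hE', hsub⟩
      obtain ⟨v, hv⟩ := hts.toIsCutSystem.nonempty E' hE'
      have := hsub hv
      exact absurd ⟨v, this⟩ hCF
    · ext v
      simp only [Set.mem_inter_iff, Set.mem_empty_iff_false, iff_false, not_and]
      rintro hv ⟨hvC, u, hu, hadj⟩
      exact no_edge_cstar hv (hCF' hu) hadj.symm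

/-- Lemma K: if the star of a cut avoids the boundary of a thin pre-cut `F`,
the pair is nested. -/
lemma nested_of_star_avoid (hE : C ∈ 𝒞) (h0 : cstar G C ∩ bdry G F = ∅)
    (hFn : (bdry G F).ncard = κ) (hFf : (bdry G F).Finite) : Nested G 𝒞 C F := by
  classical
  have hnoF : ∀ a b, a ∈ F → b ∈ cstar G F → ¬ G.Adj a b := fun a b ha hb => no_edge_cstar ha hb
  have hnoF' : ∀ a b, a ∈ cstar G F → b ∈ F → ¬ G.Adj a b :=
    fun a b ha hb hab => no_edge_cstar hb ha hab.symm
  have hsubFF : cstar G C ⊆ F ∪ cstar G F := by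
    intro v hv
    have : v ∉ bdry G F := fun hb => (Set.eq_empty_iff_forall_notMem.1 h0 v) ⟨hv, hb⟩
    exact compl_bdry (G := G) (C := F) ▸ (Set.mem_compl_iff _ _).2 this
  obtain ⟨G₂, hG₂, hG₂s⟩ := cut_in_cstar hts hE
  obtain ⟨Astar, hG₂A, hAcomp⟩ := comp_exists (hts.toIsCutSystem.conn G₂ hG₂) hG₂s
  have hA𝒞 : Astar ∈ 𝒞 := comp_cstar_mem hts hE hAcomp ⟨G₂, hG₂, hG₂A⟩
  have hDA : bdry G Astar = bdry G C := bdry_comp_cstar_eq hts hE hAcomp hA𝒞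
  -- the boundary of E is fully adjacent to Astar
  have hadjA : ∀ v ∈ bdry G C, ∃ u ∈ Astar, G.Adj u v := by
    intro v hv; rw [← hDA] at hv; exact hv.2
  have hAsub : Astar ⊆ F ∪ cstar G F := fun v hv => hsubFF (hAcomp.1 hv)
  have hAne : Astar.Nonempty := connSet_nonempty hAcomp.2.1
  -- key subroutine: from two cut-components on the two sides of F, conclude bdry C = bdry F
  have hkey : ∀ K K', K ∈ 𝒞 → IsCompOf G K (cstar G C) → K ⊆ F →
      K' ∈ 𝒞 → IsCompOf G K' (cstar G C) → K' ⊆ cstar G F →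
      Nested G 𝒞 C F := by
    intro K K' hK𝒞 hKcomp hKF hK'𝒞 hK'comp hK'F
    have hDK : bdry G K = bdry G C := bdry_comp_cstar_eq hts hE hKcomp hK𝒞
    have hDK' : bdry G K' = bdry G C := bdry_comp_cstar_eq hts hE hK'comp hK'𝒞
    have hsub : bdry G C ⊆ bdry G F := by
      intro u hu
      obtain ⟨a, haA, ha⟩ : ∃ u' ∈ K', G.Adj u' u := by
        rw [← hDK'] at hu; exact hu.2
      obtain ⟨b, hbK, hb⟩ : ∃ u' ∈ K, G.Adj u' u := by
        rw [← hDK] at hu; exact hu.2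
      rcases mem_tri G F u with h | h | h
      · exact absurd ha.symm (no_edge_cstar h (hK'F haA))
      · exact h
      · exact absurd hb (no_edge_cstar (hKF hbK) h)
    have heq : bdry G C = bdry G F :=
      Set.eq_of_subset_of_ncard_le hsub (by rw [hts.thin C hE, hFn]) hFf
    refine nested_of_avoid hts hE ?_
    rw [← heq]
    ext v
    simp only [Set.mem_inter_iff, Set.mem_empty_iff_false, iff_false, not_and]
    exact fun hv hb => hb.1 hv
  rcases connSet_split_cases hAcomp.2.1 hAsub hnoF hnoF' hAne with hAF | hAF
  · -- Astar ⊆ F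
    have hFstarD : cstar G F ∩ bdry G C = ∅ := by
      ext v
      simp only [Set.mem_inter_iff, Set.mem_empty_iff_false, iff_false, not_and]
      intro hv hvb
      obtain ⟨u, hu, hadj⟩ := hadjA v hvb
      exact no_edge_cstar (hAF hu) hv hadj
    by_cases hcut : ∃ E' ∈ 𝒞, E' ⊆ cstar G C ∩ cstar G F
    · obtain ⟨G₃, hG₃, hG₃s⟩ := hcut
      obtain ⟨K₃, hG₃K, hKcomp⟩ := comp_exists (hts.toIsCutSystem.conn G₃ hG₃)
        (fun v hv => (hG₃s hv).1)
      have hK𝒞 : K₃ ∈ 𝒞 := comp_cstar_mem hts hE hKcomp ⟨G₃, hG₃, hG₃K⟩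
      have hKsub : K₃ ⊆ F ∪ cstar G F := fun v hv => hsubFF (hKcomp.1 hv)
      have hKF : K₃ ⊆ cstar G F := by
        refine connSet_split hKcomp.2.1 (by rwa [Set.union_comm] at hKsub) hnoF' ?_
        obtain ⟨v, hv⟩ := hts.toIsCutSystem.nonempty G₃ hG₃
        exact ⟨v, hG₃K hv, (hG₃s hv).2⟩
      -- symmetric use of hkey with roles flipped
      exact hkey Astar K₃ hA𝒞 hAcomp hAF hK𝒞 hKcomp hKF
    · exact ⟨cstar G C ∩ cstar G F, hcut, Or.inr (Or.inr (Or.inr ⟨rfl, h0, hFstarD⟩))⟩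
  · -- Astar ⊆ cstar G F
    have hFD : F ∩ bdry G C = ∅ := by
      ext v
      simp only [Set.mem_inter_iff, Set.mem_empty_iff_false, iff_false, not_and]
      intro hv hvb
      obtain ⟨u, hu, hadj⟩ := hadjA v hvb
      exact no_edge_cstar hv (hAF hu) hadj.symm
    by_cases hcut : ∃ E' ∈ 𝒞, E' ⊆ cstar G C ∩ F
    · obtain ⟨G₄, hG₄, hG₄s⟩ := hcut
      obtain ⟨K₄, hG₄K, hKcomp⟩ := comp_exists (hts.toIsCutSystem.conn G₄ hG₄)
        (fun v hv => (hG₄s hv).1)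
      have hK𝒞 : K₄ ∈ 𝒞 := comp_cstar_mem hts hE hKcomp ⟨G₄, hG₄, hG₄K⟩
      have hKsub : K₄ ⊆ F ∪ cstar G F := fun v hv => hsubFF (hKcomp.1 hv)
      have hKF : K₄ ⊆ F := by
        refine connSet_split hKcomp.2.1 hKsub hnoF ?_
        obtain ⟨v, hv⟩ := hts.toIsCutSystem.nonempty G₄ hG₄
        exact ⟨v, hG₄K hv, (hG₄s hv).2⟩
      exact hkey K₄ Astar hK𝒞 hKcomp hKF hA𝒞 hAcomp hAF
    · exact ⟨cstar G C ∩ F, hcut, Or.inr (Or.inr (Or.inl ⟨rfl, h0, hFD⟩))⟩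

/-- Step 1: if two thin pre-cuts are not nested then the boundary of `F` meets
both `E` and `cstar E`. -/
lemma links_nonempty (hE : PreCut G 𝒞 E) (hF : PreCut G 𝒞 F) (hnn : ¬ Nested G 𝒞 E F) :
    (E ∩ bdry G F).Nonempty ∧ (cstar G E ∩ bdry G F).Nonempty := by
  have hFn := bdry_precut_ncard hts hF
  have hFf := bdry_precut_finite hts hF
  constructor
  · rw [Set.nonempty_iff_ne_empty]
    intro h0
    rcases hE with hE𝒞 | ⟨C, hC, rfl⟩
    · exact hnn (nested_of_avoid hts hE𝒞 h0)
    · exact hnn (nested_star_left hts hC (nested_of_star_avoid hts hC h0 hFn hFf))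
  · rw [Set.nonempty_iff_ne_empty]
    intro h0
    rcases hE with hE𝒞 | ⟨C, hC, rfl⟩
    · exact hnn (nested_of_star_avoid hts hE𝒞 h0 hFn hFf)
    · rw [hts.toIsCutSystem.star_star C hC] at h0
      exact hnn (nested_star_left hts hC (nested_of_avoid hts hC h0))

end cutsys


section tight
variable {G : SimpleGraph V} {S A B Q : Set V} {x y z : V}

/-- The graph `G` with the vertex `z` isolated. -/
def Gdel (G : SimpleGraph V) (z : V) : SimpleGraph V where
  Adj a b := G.Adj a b ∧ a ≠ z ∧ b ≠ z
  symm := ⟨fun a b ⟨h1, h2, h3⟩ => ⟨h1.symm, h3, h2⟩⟩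
  loopless := ⟨fun a ⟨h1, _, _⟩ => G.irrefl h1⟩

lemma induce_Gdel (hz : z ∉ A) : (Gdel G z).induce A = G.induce A := by
  ext ⟨a, ha⟩ ⟨b, hb⟩
  simp only [SimpleGraph.comap_adj, Function.Embedding.coe_subtype, Gdel]
  exact ⟨fun h => h.1, fun h => ⟨h, fun e => hz (e ▸ ha), fun e => hz (e ▸ hb)⟩⟩

lemma connSet_Gdel (hz : z ∉ A) : ConnSet (Gdel G z) A ↔ ConnSet G A := by
  unfold ConnSet
  rw [induce_Gdel hz]

lemma comp_Gdel (hz : z ∈ S) (hA : IsCompOf G A Sᶜ) :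
    IsCompOf (Gdel G z) A (S \ {z})ᶜ := by
  have hzA : z ∉ A := fun h => hA.1 h hz
  obtain ⟨hAS, hAc, hAmax⟩ := hA
  refine ⟨fun v hv hvS => hAS hv hvS.1, (connSet_Gdel hzA).2 hAc, fun R hAR hRS hRC => ?_⟩
  have hzR : z ∉ R := by
    intro hzR
    obtain ⟨a, ha⟩ := connSet_nonempty hAc
    obtain ⟨w, hw⟩ := (connSet_iff.1 hRC).2 z hzR a (hAR ha)
    cases w with
    | nil => exact hzA ha
    | cons h p => exact h.2.1 rfl
  have hRS' : R ⊆ Sᶜ := fun v hv hvS =>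
    hRS hv ⟨hvS, fun e => hzR ((e : v = z) ▸ hv)⟩
  have hRC' : ConnSet G R := (connSet_Gdel hzR).1 hRC
  exact hAmax R hAR hRS' hRC'

lemma tight_Gdel (hz : z ∈ S) (ht : TightSep G x y S) : TightSep (Gdel G z) x y (S \ {z}) := by
  obtain ⟨A, B, hA, hB, hAB, hx, hy, hadj⟩ := ht
  refine ⟨A, B, comp_Gdel hz hA, comp_Gdel hz hB, hAB, hx, hy, fun s hs => ?_⟩
  obtain ⟨⟨a, ha, hsa⟩, ⟨b, hb, hsb⟩⟩ := hadj s hs.1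
  exact ⟨⟨a, ha, hsa, hs.2, fun e => hA.1 (e ▸ ha) hz⟩,
    ⟨b, hb, hsb, hs.2, fun e => hB.1 (e ▸ hb) hz⟩⟩

lemma comp_walk_meets {u v : V} (hA : IsCompOf G A Sᶜ) (w : G.Walk u v) :
    u ∈ A → v ∉ A → ∃ z ∈ w.support, z ∈ S := by
  induction w with
  | nil => exact fun hu hv => absurd hu hv
  | cons hadj w ih =>
    intro hu hv
    rename_i p q r
    by_cases hq : q ∈ S
    · exact ⟨q, by simp [SimpleGraph.Walk.support_cons], hq⟩
    · obtain ⟨z, hz, hzS⟩ := ih (comp_absorb hA hu hadj hq) hv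
      exact ⟨z, by simp [SimpleGraph.Walk.support_cons, hz], hzS⟩

lemma tight_crossing (ht : TightSep G x y S) (w : G.Walk x y) :
    ∃ z ∈ w.support, z ∈ S := by
  obtain ⟨A, B, hA, hB, hAB, hx, hy, -⟩ := ht
  have hyA : y ∉ A := fun h => hAB (comp_unique hA hB ⟨y, h, hy⟩)
  exact comp_walk_meets hA w hx hyA

lemma tight_reachable (ht : TightSep G x y S) (hS : S.Nonempty) : G.Reachable x y := by
  obtain ⟨A, B, hA, hB, hAB, hx, hy, hadj⟩ := ht
  obtain ⟨s, hs⟩ := hS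
  obtain ⟨⟨a, ha, hsa⟩, ⟨b, hb, hsb⟩⟩ := hadj s hs
  obtain ⟨wa, hwa⟩ := (connSet_iff.1 hA.2.1).2 x hx a ha
  obtain ⟨wb, hwb⟩ := (connSet_iff.1 hB.2.1).2 b hb y hy
  have r1 : G.Reachable x a := ⟨wa⟩
  have r2 : G.Reachable b y := ⟨wb⟩
  exact r1.trans (hsa.reachable.symm.trans (hsb.reachable.trans r2))

/-- There are only finitely many tight `x`-`y` separators of any given finite order. -/
lemma tight_finite (k : ℕ) : ∀ (G : SimpleGraph V) (x y : V),
    {S : Set V | TightSep G x y S ∧ S.Finite ∧ S.ncard = k}.Finite := by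
  induction k with
  | zero =>
    intro G x y
    refine Set.Finite.subset (Set.finite_singleton ∅) ?_
    rintro S ⟨-, hf, hn⟩
    exact (Set.ncard_eq_zero hf).1 hn
  | succ n ih =>
    intro G x y
    by_cases hne : {S : Set V | TightSep G x y S ∧ S.Finite ∧ S.ncard = n + 1}.Nonempty
    swap
    · rw [Set.not_nonempty_iff_eq_empty] at hne
      rw [hne]
      exact Set.finite_empty
    obtain ⟨S₀, hS₀t, hS₀f, hS₀n⟩ := hne
    have hS₀ne : S₀.Nonempty := Set.nonempty_of_ncard_ne_zero (by rw [hS₀n]; omega)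
    obtain ⟨w⟩ := tight_reachable hS₀t hS₀ne
    refine Set.Finite.subset (Set.Finite.biUnion (List.finite_toSet w.support)
      (t := fun z => {S : Set V | (TightSep G x y S ∧ S.Finite ∧ S.ncard = n + 1) ∧ z ∈ S})
      (fun z _ => ?_)) ?_
    · refine Set.Finite.of_finite_image (f := fun S => S \ {z}) ?_ ?_
      · refine Set.Finite.subset (ih (Gdel G z) x y) ?_
        rintro T ⟨S, ⟨⟨hSt, hSf, hSn⟩, hzS⟩, rfl⟩
        refine ⟨tight_Gdel hzS hSt, hSf.diff, ?_⟩
        show (S \ {z}).ncard = n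
        have := Set.ncard_diff_singleton_add_one hzS hSf
        omega
      · rintro S₁ ⟨-, hz₁⟩ S₂ ⟨-, hz₂⟩ h
        have h : S₁ \ {z} = S₂ \ {z} := h
        have e1 : S₁ = insert z (S₁ \ {z}) := by
          rw [Set.insert_diff_singleton, Set.insert_eq_of_mem hz₁]
        have e2 : S₂ = insert z (S₂ \ {z}) := by
          rw [Set.insert_diff_singleton, Set.insert_eq_of_mem hz₂]
        rw [e1, e2, h]

    · intro S hS
      obtain ⟨z, hzw, hzS⟩ := tight_crossing hS.1 w
      exact Set.mem_biUnion hzw ⟨hS, hzS⟩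

end tight


section assemble
variable {G : SimpleGraph V} {𝒞 : Set (Set V)} {κ : ℕ} {C E F A X : Set V}

lemma cut_is_comp (hconn : ConnSet G F) : IsCompOf G F (bdry G F)ᶜ := by
  refine comp_of_conn_bdry hconn ?_ subset_rfl
  intro v hv
  have : v ∉ bdry G F := fun hb => hb.1 hv
  exact ⟨this, this⟩

lemma good_comp_meets (hA : ConnSet G A) (hbd : bdry G A = bdry G F)
    (h1 : (E ∩ bdry G F).Nonempty) (h2 : (cstar G E ∩ bdry G F).Nonempty) :
    (A ∩ bdry G E).Nonempty := by
  rw [Set.nonempty_iff_ne_empty]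
  intro h0
  have hsub : A ⊆ E ∪ cstar G E := by
    intro v hv
    rcases mem_tri G E v with h | h | h
    · exact Or.inl h
    · exact absurd (Set.eq_empty_iff_forall_notMem.1 h0 v) (fun hh => hh ⟨hv, h⟩)
    · exact Or.inr h
  have hne : A.Nonempty := connSet_nonempty hA
  rcases connSet_split_cases hA hsub (fun a b ha hb => no_edge_cstar ha hb)
      (fun a b ha hb hab => no_edge_cstar hb ha hab.symm) hne with hAE | hAE
  · obtain ⟨v, hv1, hv2⟩ := h2
    rw [← hbd] at hv2
    obtain ⟨u, hu, hadj⟩ := hv2.2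
    exact no_edge_cstar (hAE hu) hv1 hadj
  · obtain ⟨v, hv1, hv2⟩ := h1
    rw [← hbd] at hv2
    obtain ⟨u, hu, hadj⟩ := hv2.2
    exact no_edge_cstar hv1 (hAE hu) hadj.symm

variable (hts : IsThinCutSystem G 𝒞 κ)
include hts

lemma step2 (hE : PreCut G 𝒞 E) (hF : PreCut G 𝒞 F) (hnn : ¬ Nested G 𝒞 E F) :
    (∃ x ∈ bdry G E, ∃ y ∈ bdry G E, TightSep G x y (bdry G F)) ∧
    (∃ v ∈ bdry G E, v ∈ F) ∧ (∃ v ∈ bdry G E, v ∈ cstar G F) := by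
  obtain ⟨h1, h2⟩ := links_nonempty hts hE hF hnn
  obtain ⟨A, hA𝒞, hAF, hAcomp, hAbd⟩ := exists_good_comp hts hF
  obtain ⟨B, hB𝒞, hBF, hBcomp, hBbd⟩ := exists_good_comp hts (precut_cstar hts hF)
  rw [bdry_cstar_pre hts hF] at hBcomp hBbd
  obtain ⟨x, hxA, hxE⟩ := good_comp_meets hAcomp.2.1 hAbd h1 h2
  obtain ⟨y, hyB, hyE⟩ := good_comp_meets hBcomp.2.1 hBbd h1 h2
  refine ⟨⟨x, hxE, y, hyE, A, B, hAcomp, hBcomp, ?_, hxA, hyB, ?_⟩,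
    ⟨x, hxE, hAF hxA⟩, ⟨y, hyE, hBF hyB⟩⟩
  · intro hAB
    have : x ∈ F ∩ cstar G F := ⟨hAF hxA, hBF (hAB ▸ hxA)⟩
    rw [cstar_disjoint] at this
    exact this
  · intro s hs
    constructor
    · obtain ⟨u, hu, hadj⟩ := (hAbd ▸ hs : s ∈ bdry G A).2
      exact ⟨u, hu, hadj.symm⟩
    · obtain ⟨u, hu, hadj⟩ := (hBbd ▸ hs : s ∈ bdry G B).2
      exact ⟨u, hu, hadj.symm⟩

theorem stmt16' (E : Set V) (hE : PreCut G 𝒞 E) :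
    {F : Set V | PreCut G 𝒞 F ∧ ¬ Nested G 𝒞 E F}.Finite := by
  classical
  have hEfin : (bdry G E).Finite := bdry_precut_finite hts hE
  have hbig : (⋃ x ∈ bdry G E, ⋃ y ∈ bdry G E,
      {S : Set V | TightSep G x y S ∧ S.Finite ∧ S.ncard = κ}).Finite :=
    hEfin.biUnion (fun x _ => hEfin.biUnion (fun y _ => tight_finite κ G x y))
  refine Set.Finite.subset (hbig.biUnion (t := fun S =>
      ⋃ v ∈ bdry G E, ({F : Set V | IsCompOf G F Sᶜ ∧ v ∈ F} ∪
        (cstar G) '' {C : Set V | IsCompOf G C Sᶜ ∧ v ∈ C}))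
      (fun S _ => hEfin.biUnion (fun v _ => Set.Finite.union
        (Set.Subsingleton.finite (fun F₁ h₁ F₂ h₂ =>
          comp_unique h₁.1 h₂.1 ⟨v, h₁.2, h₂.2⟩))
        (Set.Finite.image _ (Set.Subsingleton.finite (fun F₁ h₁ F₂ h₂ =>
          comp_unique h₁.1 h₂.1 ⟨v, h₁.2, h₂.2⟩)))))) ?_
  rintro F ⟨hF, hnn⟩
  obtain ⟨⟨x, hxE, y, hyE, htight⟩, ⟨v₁, hv₁E, hv₁F⟩, ⟨v₂, hv₂E, hv₂F⟩⟩ := step2 hts hE hF hnn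
  have hSmem : bdry G F ∈ ⋃ x ∈ bdry G E, ⋃ y ∈ bdry G E,
      {S : Set V | TightSep G x y S ∧ S.Finite ∧ S.ncard = κ} := by
    refine Set.mem_biUnion hxE (Set.mem_biUnion hyE ?_)
    exact ⟨htight, bdry_precut_finite hts hF, bdry_precut_ncard hts hF⟩
  refine Set.mem_biUnion hSmem ?_
  rcases hF with hF𝒞 | ⟨C, hC, rfl⟩
  · refine Set.mem_biUnion hv₁E (Or.inl ⟨cut_is_comp (hts.toIsCutSystem.conn F hF𝒞), hv₁F⟩)
  · refine Set.mem_biUnion hv₂E (Or.inr ?_)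
    rw [hts.toIsCutSystem.star_star C hC] at hv₂F
    refine ⟨C, ⟨?_, hv₂F⟩, rfl⟩
    have := cut_is_comp (G := G) (hts.toIsCutSystem.conn C hC)
    rwa [← bdry_cstar_cut hts hC] at this

end assemble

theorem stmt16 (G : SimpleGraph V) (hG : G.Connected) (𝒞 : Set (Set V)) (κ : ℕ)
    (h : IsThinCutSystem G 𝒞 κ) (E : Set V) (hE : PreCut G 𝒞 E) :
    {F : Set V | PreCut G 𝒞 F ∧ ¬ Nested G 𝒞 E F}.Finite := by
  exact stmt16' h E hE
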